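/- arXiv:1702.04417 — 3 statements merged into one kernel-verified Lean document; each statement's English description precedes it below -/
import Mathlib

section
/- Let A₁ : H → H₁ and A₂ : H → H₂ be bounded linear operators between Hilbert spaces, with A₂ surjective. Then the operator A = (A₁, A₂) : H → H₁ ⊕ H₂ is Fredholm if and only if the restriction of A₁ to ker A₂ (as an operator ker A₂ → H₁) is Fredholm, and in that case ind A = ind (A₁|_{ker A₂}). -/
open Module

/-- A bounded operator is Fredholm if its kernel is finite dimensional and its range
is closed with finite-dimensional cokernel. -/
def IsFredholm {H H' : Type*} [NormedAddCommGroup H] [NormedSpace ℂ H]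
    [NormedAddCommGroup H'] [NormedSpace ℂ H'] (T : H →L[ℂ] H') : Prop :=
  FiniteDimensional ℂ (LinearMap.ker (T : H →ₗ[ℂ] H')) ∧ IsClosed (LinearMap.range (T : H →ₗ[ℂ] H') : Set H') ∧
    FiniteDimensional ℂ (H' ⧸ LinearMap.range (T : H →ₗ[ℂ] H'))

/-- The Fredholm index: `dim ker - dim coker`. -/
noncomputable def fredIndex {H H' : Type*} [NormedAddCommGroup H] [NormedSpace ℂ H]
    [NormedAddCommGroup H'] [NormedSpace ℂ H'] (T : H →L[ℂ] H') : ℤ :=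
  (finrank ℂ (LinearMap.ker (T : H →ₗ[ℂ] H')) : ℤ) - (finrank ℂ (H' ⧸ LinearMap.range (T : H →ₗ[ℂ] H')) : ℤ)

/-!
The map `h ↦ (A₁ h, A₂ h)` and `A₁` restricted to `ker A₂` have literally the same kernel,
`ker A₁ ∩ ker A₂`. Since `A₂` is onto, every class of `(H₁ × H₂) ⧸ range A` has a representative
`(x, 0)`, and `(x, 0)` lies in `range A` exactly when `x` lies in the range of the restriction;
so the cokernels are isomorphic too. For closedness of the ranges, a bounded right inverse `S`
of `A₂` (which exists because `ker A₂` has an orthogonal complement) exhibits `range A` as the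
preimage of the restricted range under the continuous map `(x, y) ↦ x - A₁ (S y)`.
-/

open Function LinearMap

namespace LinearMap

variable {R M N P : Type*} [Ring R] [AddCommGroup M] [AddCommGroup N] [AddCommGroup P]
  [Module R M] [Module R N] [Module R P] (f : M →ₗ[R] N) (g : M →ₗ[R] P)

def kerProdEquivKerDomRestrict : ker (f.prod g) ≃ₗ[R] ker (f.domRestrict (ker g)) where
  toFun x := ⟨⟨x, (Prod.ext_iff.1 (mem_ker.1 x.2)).2⟩, (Prod.ext_iff.1 (mem_ker.1 x.2)).1⟩
  invFun x := ⟨x, Prod.ext x.2 x.1.2⟩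
  map_add' _ _ := rfl
  map_smul' _ _ := rfl
  left_inv _ := rfl
  right_inv _ := rfl

theorem mem_range_domRestrict_ker_iff (x : N) :
    x ∈ range (f.domRestrict (ker g)) ↔ (x, 0) ∈ range (f.prod g) := by
  constructor
  · rintro ⟨⟨m, hm⟩, rfl⟩
    exact ⟨m, Prod.ext rfl hm⟩
  · rintro ⟨m, hm⟩
    exact ⟨⟨m, congrArg Prod.snd hm⟩, congrArg Prod.fst hm⟩

theorem mem_range_prod_iff {S : P → M} (hS : RightInverse S g) (x : N) (y : P) :
    (x, y) ∈ range (f.prod g) ↔ x - f (S y) ∈ range (f.domRestrict (ker g)) := by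
  constructor
  · rintro ⟨m, hm⟩
    obtain ⟨rfl, rfl⟩ := Prod.ext_iff.1 hm
    exact ⟨⟨m - S (g m), by simp [hS (g m)]⟩, by simp⟩
  · rintro ⟨⟨k, hk⟩, hkx⟩
    refine ⟨k + S y, Prod.ext ?_ ?_⟩
    · simp_all
    · simp_all [mem_ker.1 hk, hS y]

theorem range_domRestrict_ker_eq_ker_mkQ_comp_inl :
    range (f.domRestrict (ker g)) = ker ((range (f.prod g)).mkQ ∘ₗ inl R N P) := by
  ext x
  simp only [mem_range_domRestrict_ker_iff, mem_ker, comp_apply, inl_apply, Submodule.mkQ_apply,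
    Submodule.Quotient.mk_eq_zero]

theorem surjective_mkQ_comp_inl (hg : Surjective g) :
    Surjective ((range (f.prod g)).mkQ ∘ₗ inl R N P) := by
  intro q
  obtain ⟨⟨x, y⟩, rfl⟩ := Submodule.mkQ_surjective _ q
  obtain ⟨m, rfl⟩ := hg y
  exact ⟨x - f m, (Submodule.Quotient.eq _).2 ⟨-m, by simp⟩⟩

noncomputable def quotRangeDomRestrictEquiv (hg : Surjective g) :
    (N ⧸ range (f.domRestrict (ker g))) ≃ₗ[R] (N × P) ⧸ range (f.prod g) :=
  (Submodule.quotEquivOfEq _ _ (range_domRestrict_ker_eq_ker_mkQ_comp_inl f g)).trans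
    (quotKerEquivOfSurjective _ (surjective_mkQ_comp_inl f g hg))

end LinearMap

namespace ContinuousLinearMap

theorem isClosed_range_prod_iff {R M N P : Type*} [Ring R]
    [TopologicalSpace M] [AddCommGroup M] [Module R M]
    [TopologicalSpace N] [AddCommGroup N] [IsTopologicalAddGroup N] [Module R N]
    [TopologicalSpace P] [AddCommGroup P] [Module R P] {f : M →L[R] N} {g : M →L[R] P}
    (hg : g.HasRightInverse) :
    IsClosed (range ((f : M →ₗ[R] N).prod (g : M →ₗ[R] P)) : Set (N × P)) ↔
      IsClosed (range ((f : M →ₗ[R] N).domRestrict (ker (g : M →ₗ[R] P))) : Set N) := by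
  obtain ⟨S, hS⟩ := hg
  constructor
  · intro h
    have hpre : (range ((f : M →ₗ[R] N).domRestrict (ker (g : M →ₗ[R] P))) : Set N) =
        (fun x ↦ (x, (0 : P))) ⁻¹' range ((f : M →ₗ[R] N).prod (g : M →ₗ[R] P)) :=
      Set.ext (mem_range_domRestrict_ker_iff (f : M →ₗ[R] N) (g : M →ₗ[R] P))
    rw [hpre]
    exact h.preimage (continuous_id.prodMk continuous_const)
  · intro h
    have hpre : (range ((f : M →ₗ[R] N).prod (g : M →ₗ[R] P)) : Set (N × P)) =
        (fun p : N × P ↦ p.1 - f (S p.2)) ⁻¹'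
          range ((f : M →ₗ[R] N).domRestrict (ker (g : M →ₗ[R] P))) :=
      Set.ext fun p ↦ mem_range_prod_iff (f : M →ₗ[R] N) (g : M →ₗ[R] P) hS p.1 p.2
    rw [hpre]
    exact h.preimage (continuous_fst.sub ((f.continuous.comp S.continuous).comp continuous_snd))

theorem HasRightInverse.of_surjective_of_closedComplemented {𝕜 E F : Type*}
    [NontriviallyNormedField 𝕜]
    [NormedAddCommGroup E] [NormedSpace 𝕜 E] [CompleteSpace E]
    [NormedAddCommGroup F] [NormedSpace 𝕜 F] [CompleteSpace F] {f : E →L[𝕜] F}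
    (hf : Surjective f) (hker : (ker (f : E →ₗ[𝕜] F)).ClosedComplemented) :
    f.HasRightInverse := by
  obtain ⟨P, hP⟩ := hker
  let e := equivProdOfSurjectiveOfIsCompl P f
    (range_eq_top.2 fun x ↦ ⟨x, hP x⟩) (range_eq_top.2 hf) (isTopCompl_of_proj hP).isCompl.symm
  exact ⟨e.symm.toContinuousLinearMap.comp (inr 𝕜 _ F),
    fun y ↦ congrArg Prod.snd (e.apply_symm_apply (0, y))⟩

theorem HasRightInverse.of_surjective {𝕜 E F : Type*} [RCLike 𝕜]
    [NormedAddCommGroup E] [InnerProductSpace 𝕜 E] [CompleteSpace E]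
    [NormedAddCommGroup F] [NormedSpace 𝕜 F] [CompleteSpace F] {f : E →L[𝕜] F}
    (hf : Surjective f) : f.HasRightInverse :=
  of_surjective_of_closedComplemented hf
    (ker (f : E →ₗ[𝕜] F)).isTopCompl_orthogonal.closedComplemented

end ContinuousLinearMap

section Fredholm

variable {E F E' F' : Type*} [NormedAddCommGroup E] [NormedSpace ℂ E]
  [NormedAddCommGroup F] [NormedSpace ℂ F] [NormedAddCommGroup E'] [NormedSpace ℂ E']
  [NormedAddCommGroup F'] [NormedSpace ℂ F'] {T : E →L[ℂ] F} {T' : E' →L[ℂ] F'}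

theorem isFredholm_congr (eker : ker (T : E →ₗ[ℂ] F) ≃ₗ[ℂ] ker (T' : E' →ₗ[ℂ] F'))
    (ecoker : (F ⧸ range (T : E →ₗ[ℂ] F)) ≃ₗ[ℂ] F' ⧸ range (T' : E' →ₗ[ℂ] F'))
    (hclosed : IsClosed (range (T : E →ₗ[ℂ] F) : Set F) ↔
      IsClosed (range (T' : E' →ₗ[ℂ] F') : Set F')) :
    IsFredholm T ↔ IsFredholm T' :=
  ⟨fun ⟨_, hT, _⟩ ↦ ⟨eker.finiteDimensional, hclosed.1 hT, ecoker.finiteDimensional⟩,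
    fun ⟨_, hT', _⟩ ↦ ⟨eker.symm.finiteDimensional, hclosed.2 hT', ecoker.symm.finiteDimensional⟩⟩

theorem fredIndex_congr (eker : ker (T : E →ₗ[ℂ] F) ≃ₗ[ℂ] ker (T' : E' →ₗ[ℂ] F'))
    (ecoker : (F ⧸ range (T : E →ₗ[ℂ] F)) ≃ₗ[ℂ] F' ⧸ range (T' : E' →ₗ[ℂ] F')) :
    fredIndex T = fredIndex T' := by
  rw [fredIndex, fredIndex, eker.finrank_eq, ecoker.finrank_eq]

end Fredholm

theorem fredholm_prod_iff_restrict_general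
    {H H₁ H₂ : Type*} [NormedAddCommGroup H] [InnerProductSpace ℂ H] [CompleteSpace H]
    [NormedAddCommGroup H₁] [InnerProductSpace ℂ H₁]
    [NormedAddCommGroup H₂] [InnerProductSpace ℂ H₂] [CompleteSpace H₂]
    (A₁ : H →L[ℂ] H₁) (A₂ : H →L[ℂ] H₂) (hA₂ : Function.Surjective A₂) :
    (IsFredholm (A₁.prod A₂) ↔
      IsFredholm (A₁.comp (Submodule.subtypeL (LinearMap.ker (A₂ : H →ₗ[ℂ] H₂))))) ∧
    (IsFredholm (A₁.prod A₂) →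
      fredIndex (A₁.prod A₂) = fredIndex (A₁.comp (Submodule.subtypeL (LinearMap.ker (A₂ : H →ₗ[ℂ] H₂))))) := by
  have eker := (A₁ : H →ₗ[ℂ] H₁).kerProdEquivKerDomRestrict (A₂ : H →ₗ[ℂ] H₂)
  have ecoker := ((A₁ : H →ₗ[ℂ] H₁).quotRangeDomRestrictEquiv (A₂ : H →ₗ[ℂ] H₂) hA₂).symm
  have hclosed := ContinuousLinearMap.isClosed_range_prod_iff (f := A₁)
    (ContinuousLinearMap.HasRightInverse.of_surjective hA₂)
  exact ⟨isFredholm_congr eker ecoker hclosed, fun _ ↦ fredIndex_congr eker ecoker⟩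

/-- If `A₂ : H → H₂` is surjective, then `A = (A₁, A₂) : H → H₁ ⊕ H₂` is
Fredholm iff the restriction of `A₁` to `ker A₂` is Fredholm, and the indices agree. -/
theorem fredholm_prod_iff_restrict
    {H H₁ H₂ : Type*} [NormedAddCommGroup H] [InnerProductSpace ℂ H] [CompleteSpace H]
    [NormedAddCommGroup H₁] [InnerProductSpace ℂ H₁] [CompleteSpace H₁]
    [NormedAddCommGroup H₂] [InnerProductSpace ℂ H₂] [CompleteSpace H₂]
    (A₁ : H →L[ℂ] H₁) (A₂ : H →L[ℂ] H₂) (hA₂ : Function.Surjective A₂) :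
    (IsFredholm (A₁.prod A₂) ↔
      IsFredholm (A₁.comp (Submodule.subtypeL (LinearMap.ker (A₂ : H →ₗ[ℂ] H₂))))) ∧
    (IsFredholm (A₁.prod A₂) →
      fredIndex (A₁.prod A₂) = fredIndex (A₁.comp (Submodule.subtypeL (LinearMap.ker (A₂ : H →ₗ[ℂ] H₂))))) :=
  fredholm_prod_iff_restrict_general A₁ A₂ hA₂
end

section
/- With notation as above (λ ≥ 0, λᵢ > 0, ωᵢ = √(λᵢ² + λ²), and λ₀ > 0 a fixed constant with ωᵢ ≥ λ₀), the entries of the matrix Bᵢ satisfy: |2ωᵢ e^{ωᵢR} / ((λᵢ−ωᵢ) − (λᵢ+ωᵢ)e^{2ωᵢR})| ≤ 2 e^{λ₀ R}/(e^{2λ₀ R} − 1), and |λ(e^{2ωᵢR} − 1) / ((λᵢ−ωᵢ) − (λᵢ+ωᵢ)e^{2ωᵢR})| ≤ λ/λ₀. In particular, the operator norms of the matrices Bᵢ tend to 0 uniformly in i as R → ∞ and λ → 0. -/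
open Real Filter

lemma one_lt_exp_of_pos' {x : ℝ} (hx : 0 < x) : 1 < Real.exp x := by
  rw [← Real.exp_zero]; exact Real.exp_lt_exp.mpr hx

lemma exp_frac_antitone {x y : ℝ} (hy : 0 < y) (hxy : y ≤ x) :
    2 * Real.exp x / (Real.exp (2 * x) - 1) ≤ 2 * Real.exp y / (Real.exp (2 * y) - 1) := by
  have hx : 0 < x := lt_of_lt_of_le hy hxy
  have h2x : Real.exp (2 * x) = Real.exp x * Real.exp x := by
    rw [two_mul, Real.exp_add]
  have h2y : Real.exp (2 * y) = Real.exp y * Real.exp y := by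
    rw [two_mul, Real.exp_add]
  have h1x : 1 < Real.exp x := one_lt_exp_of_pos' hx
  have h1y : 1 < Real.exp y := one_lt_exp_of_pos' hy
  have hxy' : Real.exp y ≤ Real.exp x := Real.exp_le_exp.mpr hxy
  rw [div_le_div_iff₀ (by nlinarith) (by nlinarith)]
  nlinarith [mul_pos (Real.exp_pos x) (Real.exp_pos y)]

lemma tendsto_exp_frac (a : ℝ) (ha : 0 < a) :
    Tendsto (fun R' : ℝ => 2 * Real.exp (a * R') / (Real.exp (2 * a * R') - 1))
      atTop (nhds 0) := by
  have hmul : Tendsto (fun R' : ℝ => a * R') atTop atTop :=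
    Tendsto.const_mul_atTop ha tendsto_id
  have h1 : Tendsto (fun R' : ℝ => Real.exp (a * R') / 2) atTop atTop :=
    (Real.tendsto_exp_atTop.comp hmul).atTop_div_const two_pos
  have h2 : Tendsto (fun R' : ℝ => Real.exp (-(a * R')) / 2) atTop (nhds 0) := by
    have : Tendsto (fun R' : ℝ => Real.exp (-(a * R'))) atTop (nhds 0) :=
      Real.tendsto_exp_atBot.comp (tendsto_neg_atTop_atBot.comp hmul)
    simpa using this.div_const 2
  have key : Tendsto (fun R' : ℝ => (Real.exp (2 * a * R') - 1) / (2 * Real.exp (a * R')))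
      atTop atTop := by
    have h : ∀ R' : ℝ, (Real.exp (2 * a * R') - 1) / (2 * Real.exp (a * R'))
        = Real.exp (a * R') / 2 + -(Real.exp (-(a * R')) / 2) := by
      intro R'
      have he : Real.exp (2 * a * R') = Real.exp (a * R') * Real.exp (a * R') := by
        rw [← Real.exp_add]; ring_nf
      rw [he, Real.exp_neg]
      field_simp
      ring
    simp only [h]
    exact h1.atTop_add (h2.neg)
  refine key.inv_tendsto_atTop.congr fun R' => ?_
  simp only [Pi.inv_apply, inv_div]

/-- Entry estimates for the scattering matrix `Bᵢ`: with
`ωᵢ = √(λᵢ² + λ²) ≥ λ₀ > 0` and `denom = (λᵢ - ωᵢ) - (λᵢ + ωᵢ)e^{2ωᵢR}`, one has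
`|2ωᵢ e^{ωᵢR}/denom| ≤ 2 e^{λ₀R}/(e^{2λ₀R} - 1)` and
`|λ(e^{2ωᵢR} - 1)/denom| ≤ λ/λ₀`; in particular the first bound tends to `0` as `R → ∞`
(and the second is small for small `λ`), uniformly in `i`. -/
theorem scattering_matrix_entry_estimates
    (lam lami lam0 R : ℝ) (hlam : 0 ≤ lam) (hlami : 0 < lami) (hlam0 : 0 < lam0)
    (hR : 0 < R)
    (ω : ℝ) (hω : ω = Real.sqrt (lami ^ 2 + lam ^ 2)) (hωlam0 : lam0 ≤ ω)
    (denom : ℝ) (hdenom : denom = (lami - ω) - (lami + ω) * Real.exp (2 * ω * R)) :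
    |2 * ω * Real.exp (ω * R) / denom| ≤ 2 * Real.exp (lam0 * R) / (Real.exp (2 * lam0 * R) - 1) ∧
    |lam * (Real.exp (2 * ω * R) - 1) / denom| ≤ lam / lam0 ∧
    Tendsto (fun R' : ℝ => 2 * Real.exp (lam0 * R') / (Real.exp (2 * lam0 * R') - 1))
      atTop (nhds 0) := by
  have hωpos : 0 < ω := lt_of_lt_of_le hlam0 hωlam0
  have hωlami : lami ≤ ω := by
    rw [hω]
    calc lami = Real.sqrt (lami ^ 2) := by rw [Real.sqrt_sq hlami.le]
    _ ≤ Real.sqrt (lami ^ 2 + lam ^ 2) := Real.sqrt_le_sqrt (by nlinarith)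
  set E := Real.exp (2 * ω * R) with hE
  have hE1 : 1 < E := one_lt_exp_of_pos' (by positivity)
  have hdneg : denom < 0 := by
    rw [hdenom]
    nlinarith
  have habs : |denom| = (lami + ω) * E - (lami - ω) := by
    rw [abs_of_neg hdneg, hdenom]; ring
  have hlow : ω * (E - 1) ≤ |denom| := by
    rw [habs]; nlinarith
  have hlowpos : 0 < ω * (E - 1) := by nlinarith
  refine ⟨?_, ?_, tendsto_exp_frac lam0 hlam0⟩
  · have h1 : |2 * ω * Real.exp (ω * R) / denom|
        = 2 * ω * Real.exp (ω * R) / |denom| := by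
      rw [abs_div, abs_of_nonneg (by positivity)]
    rw [h1]
    calc 2 * ω * Real.exp (ω * R) / |denom|
        ≤ 2 * ω * Real.exp (ω * R) / (ω * (E - 1)) :=
          div_le_div_of_nonneg_left (by positivity) hlowpos hlow
      _ = ω * (2 * Real.exp (ω * R)) / (ω * (E - 1)) := by ring_nf
      _ = 2 * Real.exp (ω * R) / (E - 1) := mul_div_mul_left _ _ (ne_of_gt hωpos)
      _ = 2 * Real.exp (ω * R) / (Real.exp (2 * (ω * R)) - 1) := by
          rw [hE, mul_assoc]
      _ ≤ 2 * Real.exp (lam0 * R) / (Real.exp (2 * (lam0 * R)) - 1) :=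
          exp_frac_antitone (by positivity) (by nlinarith)
      _ = 2 * Real.exp (lam0 * R) / (Real.exp (2 * lam0 * R) - 1) := by
          rw [mul_assoc]
  · have h1 : |lam * (E - 1) / denom| = lam * (E - 1) / |denom| := by
      rw [abs_div, abs_of_nonneg (by nlinarith)]
    rw [h1]
    calc lam * (E - 1) / |denom|
        ≤ lam * (E - 1) / (ω * (E - 1)) :=
          div_le_div_of_nonneg_left (by nlinarith) hlowpos hlow
      _ = lam / ω := by
          rw [mul_comm ω (E - 1), ← div_div, mul_div_assoc,
            div_self (by nlinarith : E - 1 ≠ 0), mul_one]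
      _ ≤ lam / lam0 := by gcongr
end

section
/- Let T : H → H' be a bounded operator between Hilbert spaces. If T is invertible and K : H → H' is a bounded operator with ‖K‖ · ‖T⁻¹‖ < 1, then T − K is invertible. More generally, if T is Fredholm, there exists ε > 0 such that for all bounded K : H → H' with ‖K‖ < ε, the operator T − K is Fredholm with ind(T − K) = ind T. -/
open Module

section FredholmAux


theorem sub_inv_of_small' {E E' : Type*} [NormedAddCommGroup E] [NormedSpace ℂ E]
    [CompleteSpace E] [NormedAddCommGroup E'] [NormedSpace ℂ E'] [CompleteSpace E']
    (T : E →L[ℂ] E') (T' : E' →L[ℂ] E) (K : E →L[ℂ] E')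
    (h1 : T.comp T' = ContinuousLinearMap.id ℂ E') (h2 : T'.comp T = ContinuousLinearMap.id ℂ E)
    (h : ‖K‖ * ‖T'‖ < 1) :
    ∃ S : E' →L[ℂ] E, (T - K).comp S = ContinuousLinearMap.id ℂ E' ∧
      S.comp (T - K) = ContinuousLinearMap.id ℂ E := by
  have hKT' : ‖K.comp T'‖ < 1 := lt_of_le_of_lt (ContinuousLinearMap.opNorm_comp_le _ _) h
  set u : (E' →L[ℂ] E')ˣ := Units.oneSub (K.comp T') hKT' with hu
  have huval : (u : E' →L[ℂ] E') = 1 - K.comp T' := rfl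
  have hTK : (T - K).comp T' = (u : E' →L[ℂ] E') := by
    rw [huval, ContinuousLinearMap.sub_comp, h1]
    rfl
  have h2' : ∀ x, T' (T x) = x := fun x => ContinuousLinearMap.ext_iff.mp h2 x
  have hTK2 : (u : E' →L[ℂ] E').comp T = T - K := by
    ext x
    simp [huval, h2' x]
  refine ⟨T'.comp ((u⁻¹ : (E' →L[ℂ] E')ˣ) : E' →L[ℂ] E'), ?_, ?_⟩
  · rw [← ContinuousLinearMap.comp_assoc, hTK]
    have : (u : E' →L[ℂ] E').comp ((u⁻¹ : (E' →L[ℂ] E')ˣ) : E' →L[ℂ] E') = 1 := by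
      rw [← ContinuousLinearMap.mul_def, u.mul_inv]
    rw [this]; rfl
  · have h3 : ∀ y, ((u⁻¹ : (E' →L[ℂ] E')ˣ) : E' →L[ℂ] E') (((u : (E' →L[ℂ] E')ˣ) : E' →L[ℂ] E') y) = y := by
      intro y
      rw [← ContinuousLinearMap.mul_apply, u.inv_mul, ContinuousLinearMap.one_apply]
    rw [← hTK2]
    ext x
    simp only [ContinuousLinearMap.comp_apply, ContinuousLinearMap.coe_id', id_eq]
    rw [h3, h2' x]


theorem isClosed_sup_of_fd' {E : Type*} [NormedAddCommGroup E] [NormedSpace ℂ E]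
    (W G : Submodule ℂ E) (hW : IsClosed (W : Set E)) [FiniteDimensional ℂ G] :
    IsClosed ((W ⊔ G : Submodule ℂ E) : Set E) := by
  haveI : IsClosed (W : Set E) := hW
  have hb : ∀ x : E, ‖W.mkQ x‖ ≤ 1 * ‖x‖ := by
    intro x
    simpa using Submodule.Quotient.norm_mk_le W x
  let π : E →L[ℂ] E ⧸ W := W.mkQ.mkContinuous 1 hb
  have hcomap : Submodule.comap W.mkQ (Submodule.map W.mkQ G) = W ⊔ G := by
    rw [Submodule.comap_map_eq, Submodule.ker_mkQ, sup_comm]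
  have hset : ((W ⊔ G : Submodule ℂ E) : Set E)
      = π ⁻¹' ((Submodule.map W.mkQ G : Submodule ℂ (E ⧸ W)) : Set (E ⧸ W)) := by
    rw [← hcomap]; rfl
  rw [hset]
  exact (Submodule.closed_of_finiteDimensional _).preimage π.continuous

theorem fredholm_of_corner' {X Y F N : Type*}
    [NormedAddCommGroup X] [NormedSpace ℂ X]
    [NormedAddCommGroup Y] [NormedSpace ℂ Y]
    [NormedAddCommGroup F] [NormedSpace ℂ F] [FiniteDimensional ℂ F]
    [NormedAddCommGroup N] [NormedSpace ℂ N] [FiniteDimensional ℂ N]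
    (A : (X × F) ≃L[ℂ] (Y × N)) (B : X →L[ℂ] Y)
    (hB : ∀ x, (A (x, 0)).1 = B x) :
    FiniteDimensional ℂ (LinearMap.ker (B : X →ₗ[ℂ] Y)) ∧ IsClosed ((LinearMap.range (B : X →ₗ[ℂ] Y) : Submodule ℂ Y) : Set Y) ∧
    FiniteDimensional ℂ (Y ⧸ LinearMap.range (B : X →ₗ[ℂ] Y)) ∧
    (finrank ℂ (LinearMap.ker (B : X →ₗ[ℂ] Y)) : ℤ) - finrank ℂ (Y ⧸ LinearMap.range (B : X →ₗ[ℂ] Y))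
      = (finrank ℂ N : ℤ) - finrank ℂ F := by
  classical
  -- corner maps
  set Al : (X × F) →ₗ[ℂ] (Y × N) := (A : (X × F) →L[ℂ] (Y × N)).toLinearMap with hAl
  set As : (Y × N) →ₗ[ℂ] (X × F) := (A.symm : (Y × N) →L[ℂ] (X × F)).toLinearMap with hAs
  set D : X →ₗ[ℂ] N := (LinearMap.snd ℂ Y N).comp (Al.comp (LinearMap.inl ℂ X F)) with hD
  set B' : Y →ₗ[ℂ] X := (LinearMap.fst ℂ X F).comp (As.comp (LinearMap.inl ℂ Y N)) with hB'
  set C' : N →ₗ[ℂ] X := (LinearMap.fst ℂ X F).comp (As.comp (LinearMap.inr ℂ Y N)) with hC'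
  set D' : Y →ₗ[ℂ] F := (LinearMap.snd ℂ X F).comp (As.comp (LinearMap.inl ℂ Y N)) with hD'
  set E' : N →ₗ[ℂ] F := (LinearMap.snd ℂ X F).comp (As.comp (LinearMap.inr ℂ Y N)) with hE'
  have hA0 : ∀ x : X, A (x, (0 : F)) = (B x, D x) := by
    intro x
    refine Prod.ext (hB x) ?_
    simp [hD, hAl]
  have hAsymm : ∀ (y : Y) (n : N), A.symm (y, n) = (B' y + C' n, D' y + E' n) := by
    intro y n
    have : (y, n) = (y, (0 : N)) + ((0 : Y), n) := by simp
    rw [this, map_add]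
    refine Prod.ext ?_ ?_ <;> simp [hB', hC', hD', hE', hAs]
  -- basic identities
  have I1 : ∀ x : X, (B' (B x) + C' (D x), D' (B x) + E' (D x)) = (x, (0 : F)) := by
    intro x
    rw [← hAsymm, ← hA0, ContinuousLinearEquiv.symm_apply_apply]
  have I2 : ∀ n : N, A (C' n, E' n) = ((0 : Y), n) := by
    intro n
    have h := hAsymm 0 n
    simp only [map_zero, zero_add] at h
    rw [← h, ContinuousLinearEquiv.apply_symm_apply]
  -- kernel equivalence
  have hDmem : ∀ x ∈ LinearMap.ker (B : X →ₗ[ℂ] Y), E' (D x) = 0 := by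
    intro x hx
    have := congrArg Prod.snd (I1 x)
    simp only at this
    rwa [show B x = 0 from LinearMap.mem_ker.mp hx, map_zero, zero_add] at this
  have hCD : ∀ x ∈ LinearMap.ker (B : X →ₗ[ℂ] Y), C' (D x) = x := by
    intro x hx
    have := congrArg Prod.fst (I1 x)
    simp only at this
    rwa [show B x = 0 from LinearMap.mem_ker.mp hx, map_zero, zero_add] at this
  have hCmem : ∀ n ∈ LinearMap.ker E', B (C' n) = 0 ∧ D (C' n) = n := by
    intro n hn
    have h := I2 n
    rw [LinearMap.mem_ker.mp hn] at h
    constructor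
    · have := congrArg Prod.fst h
      simpa [hB (C' n)] using this
    · have := congrArg Prod.snd h
      simpa [hD, hAl] using this
  let Dk : (LinearMap.ker (B : X →ₗ[ℂ] Y)) →ₗ[ℂ] (LinearMap.ker E') :=
    LinearMap.codRestrict _ (D.comp (LinearMap.ker (B : X →ₗ[ℂ] Y)).subtype)
      (fun c => LinearMap.mem_ker.mpr (hDmem c.1 c.2))
  let Ck : (LinearMap.ker E') →ₗ[ℂ] (LinearMap.ker (B : X →ₗ[ℂ] Y)) :=
    LinearMap.codRestrict _ (C'.comp (LinearMap.ker E').subtype)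
      (fun c => LinearMap.mem_ker.mpr (hCmem c.1 c.2).1)
  have hDC : Dk.comp Ck = LinearMap.id := by
    ext n
    exact (hCmem n.1 n.2).2
  have hCDk : Ck.comp Dk = LinearMap.id := by
    ext x
    exact hCD x.1 x.2
  let eK : (LinearMap.ker (B : X →ₗ[ℂ] Y)) ≃ₗ[ℂ] (LinearMap.ker E') := LinearEquiv.ofLinear Dk Ck hDC hCDk
  haveI fdK : FiniteDimensional ℂ (LinearMap.ker (B : X →ₗ[ℂ] Y)) := Module.Finite.equiv eK.symm
  -- cokernel equivalence
  let ψ₀ : Y →ₗ[ℂ] F ⧸ LinearMap.range E' := (LinearMap.range E').mkQ.comp D'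
  have hle : LinearMap.range (B : X →ₗ[ℂ] Y) ≤ LinearMap.ker ψ₀ := by
    rintro y ⟨x, rfl⟩
    have h2 := congrArg Prod.snd (I1 x)
    simp only at h2
    have hmem : D' (B x) ∈ LinearMap.range E' := by
      refine ⟨-(D x), ?_⟩
      rw [map_neg]
      exact neg_eq_of_add_eq_zero_left h2
    simp only [LinearMap.mem_ker, ψ₀, LinearMap.comp_apply, Submodule.mkQ_apply,
      Submodule.Quotient.mk_eq_zero]
    exact hmem
  let ψ : (Y ⧸ LinearMap.range (B : X →ₗ[ℂ] Y)) →ₗ[ℂ] (F ⧸ LinearMap.range E') :=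
    Submodule.liftQ (LinearMap.range (B : X →ₗ[ℂ] Y)) ψ₀ hle
  have hψ_surj : Function.Surjective ψ := by
    intro c
    obtain ⟨f, rfl⟩ := Submodule.Quotient.mk_surjective _ c
    set p := A ((0 : X), f) with hp
    have hsp : A.symm (p.1, p.2) = ((0 : X), f) := by
      rw [show ((p.1, p.2) : Y × N) = p from rfl, hp]
      exact A.symm_apply_apply _
    have h2 : D' p.1 + E' p.2 = f := congrArg Prod.snd ((hAsymm p.1 p.2).symm.trans hsp)
    refine ⟨Submodule.Quotient.mk p.1, ?_⟩
    show Submodule.Quotient.mk (D' p.1) = Submodule.Quotient.mk f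
    rw [Submodule.Quotient.eq]
    exact ⟨-p.2, by rw [map_neg, ← h2]; abel⟩
  have hψ_inj : Function.Injective ψ := by
    rw [injective_iff_map_eq_zero]
    intro a ha
    obtain ⟨y, rfl⟩ := Submodule.Quotient.mk_surjective _ a
    have hy : Submodule.Quotient.mk (D' y) = (0 : F ⧸ LinearMap.range E') := ha
    rw [Submodule.Quotient.mk_eq_zero] at hy
    obtain ⟨n₀, hn₀⟩ := hy
    have hsub : A.symm (y, -n₀) = (B' y - C' n₀, (0 : F)) := by
      rw [hAsymm]
      refine Prod.ext ?_ ?_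
      · simp [sub_eq_add_neg]
      · simp [hn₀, map_neg]
    have happ : A (B' y - C' n₀, (0 : F)) = (y, -n₀) := by
      rw [← hsub, ContinuousLinearEquiv.apply_symm_apply]
    have hyr : B (B' y - C' n₀) = y := by
      rw [← hB (B' y - C' n₀), happ]
    rw [Submodule.Quotient.mk_eq_zero]
    exact ⟨B' y - C' n₀, hyr⟩
  let eQ : (Y ⧸ LinearMap.range (B : X →ₗ[ℂ] Y)) ≃ₗ[ℂ] (F ⧸ LinearMap.range E') :=
    LinearEquiv.ofBijective ψ ⟨hψ_inj, hψ_surj⟩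
  haveI fdQ : FiniteDimensional ℂ (Y ⧸ LinearMap.range (B : X →ₗ[ℂ] Y)) := Module.Finite.equiv eQ.symm
  -- closedness of range
  have hclosed : IsClosed ((LinearMap.range (B : X →ₗ[ℂ] Y) : Submodule ℂ Y) : Set Y) := by
    set P : Submodule ℂ (Y × N) :=
      Submodule.map Al (LinearMap.range (LinearMap.inl ℂ X F)) with hP
    set Q : Submodule ℂ (Y × N) := LinearMap.range (LinearMap.inr ℂ Y N) with hQ
    have hPQ : P ⊔ Q = (LinearMap.range (B : X →ₗ[ℂ] Y)).prod (⊤ : Submodule ℂ N) := by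
      apply le_antisymm
      · refine sup_le ?_ ?_
        · rintro z ⟨w, ⟨x, rfl⟩, rfl⟩
          have : Al (LinearMap.inl ℂ X F x) = (B x, D x) := by
            simpa [hAl] using hA0 x
          rw [this]
          exact Submodule.mem_prod.mpr ⟨⟨x, rfl⟩, trivial⟩
        · rintro z ⟨n, rfl⟩
          exact Submodule.mem_prod.mpr ⟨by simp, trivial⟩
      · rintro ⟨y, n⟩ hz
        obtain ⟨⟨x, hx⟩, -⟩ := Submodule.mem_prod.mp hz
        have hdecomp : (y, n) = Al (LinearMap.inl ℂ X F x) + LinearMap.inr ℂ Y N (n - D x) := by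
          have : Al (LinearMap.inl ℂ X F x) = (B x, D x) := by
            simpa [hAl] using hA0 x
          rw [this]
          have hx' : B x = y := hx
          refine Prod.ext ?_ ?_
          · simp [hx']
          · simp
        rw [hdecomp]
        exact Submodule.add_mem_sup (Submodule.mem_map_of_mem ⟨x, rfl⟩) ⟨n - D x, rfl⟩
    have hPclosed : IsClosed (P : Set (Y × N)) := by
      have h1 : (P : Set (Y × N)) = ⇑A '' (LinearMap.range (LinearMap.inl ℂ X F) : Set (X × F)) := by
        rw [hP, Submodule.map_coe]
        rfl
      have h2 : (LinearMap.range (LinearMap.inl ℂ X F) : Set (X × F))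
          = Prod.snd ⁻¹' ({0} : Set F) := by
        ext ⟨x, f⟩
        simp [LinearMap.mem_range, Prod.ext_iff, eq_comm]
      rw [h1, h2]
      exact A.toHomeomorph.isClosedMap _ (isClosed_singleton.preimage continuous_snd)
    have hW : IsClosed (((P ⊔ Q : Submodule ℂ (Y × N))) : Set (Y × N)) :=
      isClosed_sup_of_fd' P Q hPclosed
    rw [hPQ] at hW
    have hpre : ((LinearMap.range (B : X →ₗ[ℂ] Y) : Submodule ℂ Y) : Set Y)
        = (fun y : Y => (y, (0 : N))) ⁻¹'
          (((LinearMap.range (B : X →ₗ[ℂ] Y)).prod (⊤ : Submodule ℂ N) : Submodule ℂ (Y × N)) : Set (Y × N)) := by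
      ext y
      simp [Submodule.mem_prod]
    rw [hpre]
    exact hW.preimage (Continuous.prodMk continuous_id continuous_const)
  -- index arithmetic
  refine ⟨fdK, hclosed, fdQ, ?_⟩
  have r1 : finrank ℂ (LinearMap.ker (B : X →ₗ[ℂ] Y)) = finrank ℂ (LinearMap.ker E') := eK.finrank_eq
  have r2 : finrank ℂ (Y ⧸ LinearMap.range (B : X →ₗ[ℂ] Y)) = finrank ℂ (F ⧸ LinearMap.range E') := eQ.finrank_eq
  have r3 : finrank ℂ (LinearMap.range E') + finrank ℂ (LinearMap.ker E') = finrank ℂ N :=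
    LinearMap.finrank_range_add_finrank_ker E'
  have r4 : finrank ℂ (F ⧸ LinearMap.range E') + finrank ℂ (LinearMap.range E') = finrank ℂ F :=
    Submodule.finrank_quotient_add_finrank _
  rw [r1, r2]
  omega

end FredholmAux

/-- Stability of invertibility and of Fredholmness and the index under
small-norm perturbations: if `T` is invertible with inverse `T'` and `‖K‖·‖T'‖ < 1` then
`T - K` is invertible; and if `T` is Fredholm, then there is `ε > 0` such that `T - K` is
Fredholm with `ind (T - K) = ind T` for every `K` with `‖K‖ < ε`. -/
theorem fredholm_stability
    {H H' : Type*} [NormedAddCommGroup H] [InnerProductSpace ℂ H] [CompleteSpace H]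
    [NormedAddCommGroup H'] [InnerProductSpace ℂ H'] [CompleteSpace H']
    (T : H →L[ℂ] H') :
    (∀ (T' : H' →L[ℂ] H) (K : H →L[ℂ] H'),
        T.comp T' = ContinuousLinearMap.id ℂ H' → T'.comp T = ContinuousLinearMap.id ℂ H →
        ‖K‖ * ‖T'‖ < 1 →
        ∃ S : H' →L[ℂ] H, (T - K).comp S = ContinuousLinearMap.id ℂ H' ∧
          S.comp (T - K) = ContinuousLinearMap.id ℂ H) ∧
    (IsFredholm T → ∃ ε > 0, ∀ K : H →L[ℂ] H', ‖K‖ < ε →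
        IsFredholm (T - K) ∧ fredIndex (T - K) = fredIndex T) := by
  constructor
  · intro T' K h1 h2 h
    exact sub_inv_of_small' T T' K h1 h2 h
  · rintro ⟨hker, hclosed, hcoker⟩
    classical
    set N₀ : Submodule ℂ H := LinearMap.ker (T : H →ₗ[ℂ] H') with hN₀
    set R : Submodule ℂ H' := LinearMap.range (T : H →ₗ[ℂ] H') with hR
    haveI : FiniteDimensional ℂ N₀ := hker
    haveI : CompleteSpace R := hclosed.completeSpace_coe
    have hcompl : IsCompl R Rᗮ := Submodule.isCompl_orthogonal_of_hasOrthogonalProjection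
    haveI : FiniteDimensional ℂ (H' ⧸ R) := hcoker
    have equivF : (H' ⧸ R) ≃ₗ[ℂ] Rᗮ := Submodule.quotientEquivOfIsCompl R Rᗮ hcompl
    haveI : FiniteDimensional ℂ Rᗮ := Module.Finite.equiv equivF
    haveI : CompleteSpace N₀ := FiniteDimensional.complete ℂ _
    haveI : CompleteSpace Rᗮ := FiniteDimensional.complete ℂ _
    let P : H →L[ℂ] N₀ := Submodule.orthogonalProjection N₀
    have hP_self : ∀ v : N₀, P v.1 = v := fun v => Submodule.orthogonalProjection_mem_subspace_eq_self v
    have hT_ker : ∀ v : N₀, T v.1 = 0 := fun v => LinearMap.mem_ker.mp v.2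
    let Ac : (H × Rᗮ) →L[ℂ] (H' × N₀) :=
      (T.comp (ContinuousLinearMap.fst ℂ H Rᗮ)
        + Rᗮ.subtypeL.comp (ContinuousLinearMap.snd ℂ H Rᗮ)).prod
        (P.comp (ContinuousLinearMap.fst ℂ H Rᗮ))
    have hAc_apply : ∀ (x : H) (f : Rᗮ), Ac (x, f) = (T x + f.1, P x) := fun x f => rfl
    have hinj : LinearMap.ker (Ac : (H × Rᗮ) →ₗ[ℂ] (H' × N₀)) = ⊥ := by
      rw [LinearMap.ker_eq_bot']
      rintro ⟨x, f⟩ h0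
      rw [ContinuousLinearMap.coe_coe, hAc_apply] at h0
      have h1 : T x + f.1 = 0 := congrArg Prod.fst h0
      have h2 : P x = 0 := congrArg Prod.snd h0
      have hTx : T x ∈ R := LinearMap.mem_range_self _ x
      have hTf : T x = -f.1 := eq_neg_of_add_eq_zero_left h1
      have hTx0 : T x = 0 :=
        Submodule.disjoint_def.mp hcompl.disjoint (T x) hTx (hTf ▸ neg_mem f.2)
      have hf0 : f = 0 := by
        apply Subtype.ext
        have : f.1 = -T x := (neg_eq_of_add_eq_zero_right h1).symm
        rw [this, hTx0, neg_zero]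
        rfl
      have hxN : x ∈ N₀ := LinearMap.mem_ker.mpr hTx0
      have hx0 : x = 0 := by
        have := hP_self ⟨x, hxN⟩
        rw [h2] at this
        exact congrArg Subtype.val this.symm
      rw [hx0, hf0]
      rfl
    have hsurj : LinearMap.range (Ac : (H × Rᗮ) →ₗ[ℂ] (H' × N₀)) = ⊤ := by
      rw [LinearMap.range_eq_top]
      rintro ⟨y, n⟩
      have hy : y ∈ R ⊔ Rᗮ := by rw [hcompl.sup_eq_top]; trivial
      obtain ⟨r, hr, f', hf', hrf⟩ := Submodule.mem_sup.mp hy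
      obtain ⟨x₀, hx₀⟩ := hr
      refine ⟨(x₀ - ((P x₀ : H)) + (n : H), ⟨f', hf'⟩), ?_⟩
      rw [ContinuousLinearMap.coe_coe, hAc_apply]
      refine Prod.ext ?_ ?_
      · show T (x₀ - ((P x₀ : H)) + (n : H)) + f' = y
        rw [map_add, map_sub, hT_ker (P x₀), hT_ker n, sub_zero, add_zero, show T x₀ = r from hx₀, hrf]
      · show P (x₀ - ((P x₀ : H)) + (n : H)) = n
        rw [map_add, map_sub, hP_self (P x₀), hP_self n, sub_self, zero_add]
    let A : (H × Rᗮ) ≃L[ℂ] (H' × N₀) := ContinuousLinearEquiv.ofBijective Ac hinj hsurj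
    have hAcoe : ∀ z, A z = Ac z := fun z => rfl
    let A' : (H' × N₀) →L[ℂ] (H × Rᗮ) := A.symm
    have hA1 : Ac.comp A' = ContinuousLinearMap.id ℂ (H' × N₀) := by
      refine ContinuousLinearMap.ext fun z => ?_
      show Ac (A.symm z) = z
      rw [← hAcoe]
      exact A.apply_symm_apply z
    have hA2 : A'.comp Ac = ContinuousLinearMap.id ℂ (H × Rᗮ) := by
      refine ContinuousLinearMap.ext fun z => ?_
      show A.symm (Ac z) = z
      rw [← hAcoe]
      exact A.symm_apply_apply z
    refine ⟨(1 + ‖A'‖)⁻¹, by positivity, ?_⟩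
    intro K hK
    let Kh : (H × Rᗮ) →L[ℂ] (H' × N₀) :=
      (K.comp (ContinuousLinearMap.fst ℂ H Rᗮ)).prod 0
    have hKh_le : ‖Kh‖ ≤ ‖K‖ := by
      refine ContinuousLinearMap.opNorm_le_bound _ (norm_nonneg K) fun z => ?_
      have h1 : Kh z = (K z.1, 0) := rfl
      rw [h1]
      have h2 : ‖((K z.1, (0 : N₀)) : H' × N₀)‖ = ‖K z.1‖ := by
        simp [Prod.norm_def]
      rw [h2]
      calc ‖K z.1‖ ≤ ‖K‖ * ‖z.1‖ := K.le_opNorm _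
        _ ≤ ‖K‖ * ‖z‖ := mul_le_mul_of_nonneg_left (norm_fst_le z) (norm_nonneg K)
    have hpos : (0 : ℝ) < 1 + ‖A'‖ := by positivity
    have hsmall : ‖Kh‖ * ‖A'‖ < 1 := by
      calc ‖Kh‖ * ‖A'‖ ≤ ‖K‖ * ‖A'‖ := mul_le_mul_of_nonneg_right hKh_le (norm_nonneg A')
        _ ≤ ‖K‖ * (1 + ‖A'‖) :=
            mul_le_mul_of_nonneg_left (by linarith) (norm_nonneg K)
        _ < (1 + ‖A'‖)⁻¹ * (1 + ‖A'‖) := mul_lt_mul_of_pos_right hK hpos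
        _ = 1 := inv_mul_cancel₀ (ne_of_gt hpos)
    obtain ⟨S, hS1, hS2⟩ := sub_inv_of_small' Ac A' Kh hA1 hA2 hsmall
    have hleft : Function.LeftInverse S (Ac - Kh) := fun z => by
      have := ContinuousLinearMap.ext_iff.mp hS2 z
      simpa using this
    have hright : Function.RightInverse S (Ac - Kh) := fun z => by
      have := ContinuousLinearMap.ext_iff.mp hS1 z
      simpa using this
    let AK : (H × Rᗮ) ≃L[ℂ] (H' × N₀) :=
      ContinuousLinearEquiv.equivOfInverse (Ac - Kh) S hleft hright
    have hBK : ∀ x : H, (AK (x, 0)).1 = (T - K) x := by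
      intro x
      show ((Ac - Kh) (x, (0 : Rᗮ))).1 = (T - K) x
      rw [ContinuousLinearMap.sub_apply]
      have h1 : Ac (x, (0 : Rᗮ)) = (T x + (0 : H'), P x) := hAc_apply x 0
      have h2 : Kh (x, (0 : Rᗮ)) = (K x, 0) := rfl
      rw [h1, h2]
      simp
    obtain ⟨fd1, cls, fd2, idx⟩ := fredholm_of_corner' AK (T - K) hBK
    refine ⟨⟨fd1, cls, fd2⟩, ?_⟩
    have hT2 : finrank ℂ (H' ⧸ R) = finrank ℂ Rᗮ := equivF.finrank_eq
    show (finrank ℂ (LinearMap.ker ((T - K : H →L[ℂ] H') : H →ₗ[ℂ] H')) : ℤ) - finrank ℂ (H' ⧸ LinearMap.range ((T - K : H →L[ℂ] H') : H →ₗ[ℂ] H'))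
        = (finrank ℂ (LinearMap.ker (T : H →ₗ[ℂ] H')) : ℤ) - finrank ℂ (H' ⧸ LinearMap.range (T : H →ₗ[ℂ] H'))
    rw [idx, ← hN₀, ← hR, hT2]
end
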